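/- arXiv:1707.07164 — 2 statements merged into one kernel-verified Lean document; each statement's English description precedes it below -/
import Mathlib

section
/- Let θ : [0,∞) → ℝ^N solve the inertial Kuramoto model on a symmetric network with heterogeneous inertia and friction. Then the frequencies vanish asymptotically: lim_{t→∞} ω_i(t) = 0 for each i = 1,…,N; in particular complete synchronization emerges: lim_{t→∞} |ω_i(t) − ω_j(t)| = 0 for all i, j. -/
/-!
The energy `E = ½ ∑ mᵢ ωᵢ² - ½ ∑ᵢⱼ aᵢⱼ cos (θⱼ - θᵢ)` satisfies `E' = -∑ γᵢ ωᵢ²` along solutions: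
the coupling forces are the negative gradient of the potential term because `a` is symmetric.
So `E` is nonincreasing and, being bounded below, converges. The energy bound makes the
frequencies bounded and the equation then bounds their derivatives, so the dissipation
`∑ γᵢ ωᵢ²` is uniformly continuous; by Barbalat's lemma it tends to `0`, hence so does each `ωᵢ`.
-/

open Filter Topology Set Real

theorem exists_tendsto_atTop_of_antitoneOn_Ici {f : ℝ → ℝ} {a C : ℝ} (hf : AntitoneOn f (Ici a))
    (hC : ∀ t ≥ a, C ≤ f t) : ∃ L, Tendsto f atTop (𝓝 L) := by
  have hanti : Antitone fun t => f (max t a) := fun s t hst =>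
    hf (le_max_right s a) (le_max_right t a) (max_le_max hst le_rfl)
  have hbdd : BddBelow (range fun t => f (max t a)) :=
    ⟨C, by rintro _ ⟨t, rfl⟩; exact hC _ (le_max_right t a)⟩
  refine ⟨_, (tendsto_atTop_ciInf hanti hbdd).congr' ?_⟩
  filter_upwards [eventually_ge_atTop a] with t ht
  rw [max_eq_left ht]

/-- Barbalat's lemma. -/
theorem tendsto_zero_of_hasDerivAt_of_uniformContinuousOn {f g : ℝ → ℝ} {a L : ℝ}
    (hf : ∀ t ≥ a, HasDerivAt f (g t) t) (hfL : Tendsto f atTop (𝓝 L))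
    (hg : UniformContinuousOn g (Ici a)) : Tendsto g atTop (𝓝 0) := by
  rw [Metric.tendsto_atTop]
  intro ε hε
  obtain ⟨δ, hδ, hgδ⟩ := Metric.uniformContinuousOn_iff.1 hg (ε / 2) (half_pos hε)
  have hslope : Tendsto (fun t => (f (t + δ) - f t) / δ) atTop (𝓝 0) := by
    simpa using ((hfL.comp (tendsto_atTop_add_const_right _ δ tendsto_id)).sub hfL).div_const δ
  obtain ⟨T, hT⟩ := Metric.tendsto_atTop.1 hslope (ε / 2) (half_pos hε)
  refine ⟨max T a, fun t ht => ?_⟩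
  have hta : a ≤ t := le_of_max_le_right ht
  obtain ⟨c, ⟨htc, hct⟩, hgc⟩ := exists_hasDerivAt_eq_slope f g (lt_add_of_pos_right t hδ)
    (fun x hx => (hf x (hta.trans hx.1)).continuousAt.continuousWithinAt)
    (fun x hx => hf x (hta.trans hx.1.le))
  rw [add_sub_cancel_left] at hgc
  have hct' : dist t c < δ := by
    rw [dist_comm, Real.dist_eq, abs_of_pos (sub_pos.2 htc)]
    linarith
  calc dist (g t) 0 ≤ dist (g t) (g c) + dist (g c) 0 := dist_triangle _ _ _
    _ < ε / 2 + ε / 2 :=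
      add_lt_add (hgδ t hta c (hta.trans htc.le) hct') (hgc ▸ hT t (le_of_max_le_left ht))
    _ = ε := add_halves ε

noncomputable section

namespace InertialKuramoto

variable {N : ℕ}

def weightedSqSum (w v : Fin N → ℝ) : ℝ := ∑ i, w i * v i ^ 2

def couplingForce (a : Fin N → Fin N → ℝ) (x : Fin N → ℝ) (i : Fin N) : ℝ :=
  ∑ j, a i j * sin (x j - x i)

def couplingPotential (a : Fin N → Fin N → ℝ) (x : Fin N → ℝ) : ℝ :=
  -(∑ i, ∑ j, a i j * cos (x j - x i)) / 2

def energy (m : Fin N → ℝ) (a : Fin N → Fin N → ℝ) (x v : Fin N → ℝ) : ℝ :=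
  weightedSqSum m v / 2 + couplingPotential a x

theorem single_le_weightedSqSum {w : Fin N → ℝ} (hw : ∀ i, 0 ≤ w i) (v : Fin N → ℝ) (i : Fin N) :
    w i * v i ^ 2 ≤ weightedSqSum w v :=
  Finset.single_le_sum (f := fun i => w i * v i ^ 2) (fun j _ => mul_nonneg (hw j) (sq_nonneg _))
    (Finset.mem_univ i)

theorem weightedSqSum_nonneg {w : Fin N → ℝ} (hw : ∀ i, 0 ≤ w i) (v : Fin N → ℝ) :
    0 ≤ weightedSqSum w v :=
  Finset.sum_nonneg fun i _ => mul_nonneg (hw i) (sq_nonneg _)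

theorem hasDerivAt_weightedSqSum (w : Fin N → ℝ) {v : ℝ → Fin N → ℝ} {v' : Fin N → ℝ} {t : ℝ}
    (hv : ∀ i, HasDerivAt (fun s => v s i) (v' i) t) :
    HasDerivAt (fun s => weightedSqSum w (v s)) (2 * ∑ i, w i * v t i * v' i) t := by
  refine (HasDerivAt.fun_sum (u := Finset.univ) fun i _ =>
    ((hv i).fun_pow 2).const_mul (w i)).congr_deriv ?_
  rw [Finset.mul_sum]
  refine Finset.sum_congr rfl fun i _ => ?_
  push_cast
  ring

theorem abs_couplingForce_le (a : Fin N → Fin N → ℝ) (x : Fin N → ℝ) (i : Fin N) :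
    |couplingForce a x i| ≤ ∑ j, |a i j| := by
  refine (Finset.abs_sum_le_sum_abs _ _).trans (Finset.sum_le_sum fun j _ => ?_)
  rw [abs_mul]
  exact mul_le_of_le_one_right (abs_nonneg _) (abs_sin_le_one _)

theorem abs_couplingPotential_le (a : Fin N → Fin N → ℝ) (x : Fin N → ℝ) :
    |couplingPotential a x| ≤ (∑ i, ∑ j, |a i j|) / 2 := by
  have h : |∑ i, ∑ j, a i j * cos (x j - x i)| ≤ ∑ i, ∑ j, |a i j| := by
    refine (Finset.abs_sum_le_sum_abs _ _).trans (Finset.sum_le_sum fun i _ => ?_)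
    refine (Finset.abs_sum_le_sum_abs _ _).trans (Finset.sum_le_sum fun j _ => ?_)
    rw [abs_mul]
    exact mul_le_of_le_one_right (abs_nonneg _) (abs_cos_le_one _)
  rw [couplingPotential, abs_div, abs_neg, abs_two]
  exact div_le_div_of_nonneg_right h zero_le_two

/-- The coupling forces are minus the gradient of the potential. -/
theorem sum_sum_sin_mul_sub {a : Fin N → Fin N → ℝ} (hsym : ∀ i j, a i j = a j i)
    (x v : Fin N → ℝ) :
    ∑ i, ∑ j, a i j * sin (x j - x i) * (v j - v i) = -2 * ∑ i, couplingForce a x i * v i := by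
  have hswap : ∑ i, ∑ j, a i j * sin (x j - x i) * v j
      = -∑ i, ∑ j, a i j * sin (x j - x i) * v i := by
    rw [Finset.sum_comm, ← Finset.sum_neg_distrib]
    refine Finset.sum_congr rfl fun i _ => ?_
    rw [← Finset.sum_neg_distrib]
    refine Finset.sum_congr rfl fun j _ => ?_
    rw [hsym j i, ← neg_sub (x j), sin_neg]
    ring
  simp only [mul_sub, Finset.sum_sub_distrib, hswap, couplingForce, Finset.sum_mul]
  ring

theorem hasDerivAt_couplingPotential {a : Fin N → Fin N → ℝ} (hsym : ∀ i j, a i j = a j i)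
    {x : ℝ → Fin N → ℝ} {v : Fin N → ℝ} {t : ℝ} (hx : ∀ i, HasDerivAt (fun s => x s i) (v i) t) :
    HasDerivAt (fun s => couplingPotential a (x s)) (-∑ i, couplingForce a (x t) i * v i) t := by
  refine (((HasDerivAt.fun_sum (u := Finset.univ) fun i _ => HasDerivAt.fun_sum
    (u := Finset.univ) fun j _ =>
      (((hx j).fun_sub (hx i)).cos).const_mul (a i j)).fun_neg).div_const 2).congr_deriv ?_
  have e : ∀ i j, a i j * (-sin (x t j - x t i) * (v j - v i))
      = -(a i j * sin (x t j - x t i) * (v j - v i)) := fun i j => by ring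
  simp only [e, Finset.sum_neg_distrib, sum_sum_sin_mul_sub hsym]
  ring

/-- `ω` and `ω'` play the roles of `θ'` and `θ''`. -/
structure IsSolution (m γ : Fin N → ℝ) (a : Fin N → Fin N → ℝ) (θ ω ω' : ℝ → Fin N → ℝ) :
    Prop where
  hasDerivAt_phase : ∀ t i, HasDerivAt (fun s => θ s i) (ω t i) t
  hasDerivAt_freq : ∀ t i, HasDerivAt (fun s => ω s i) (ω' t i) t
  ode : ∀ t ≥ 0, ∀ i, m i * ω' t i = -γ i * ω t i + couplingForce a (θ t) i

namespace IsSolution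

variable {m γ : Fin N → ℝ} {a : Fin N → Fin N → ℝ} {θ ω ω' : ℝ → Fin N → ℝ}

theorem hasDerivAt_energy (hsol : IsSolution m γ a θ ω ω') (hsym : ∀ i j, a i j = a j i)
    {t : ℝ} (ht : 0 ≤ t) :
    HasDerivAt (fun s => energy m a (θ s) (ω s)) (-weightedSqSum γ (ω t)) t := by
  refine (((hasDerivAt_weightedSqSum m (hsol.hasDerivAt_freq t)).div_const 2).add
    (hasDerivAt_couplingPotential hsym (hsol.hasDerivAt_phase t))).congr_deriv ?_
  have e : ∀ i, γ i * ω t i ^ 2 = couplingForce a (θ t) i * ω t i - m i * ω t i * ω' t i :=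
    fun i => by linear_combination ω t i * hsol.ode t ht i
  simp only [weightedSqSum, e, Finset.sum_sub_distrib]
  ring

theorem antitoneOn_energy (hsol : IsSolution m γ a θ ω ω') (hsym : ∀ i j, a i j = a j i)
    (hγ : ∀ i, 0 ≤ γ i) : AntitoneOn (fun t => energy m a (θ t) (ω t)) (Ici 0) := by
  refine antitoneOn_of_hasDerivWithinAt_nonpos (convex_Ici 0)
    (fun t ht => (hsol.hasDerivAt_energy hsym ht).continuousAt.continuousWithinAt)
    (fun t ht => (hsol.hasDerivAt_energy hsym (interior_subset ht)).hasDerivWithinAt)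
    (fun t _ => neg_nonpos.2 (weightedSqSum_nonneg hγ _))

theorem weightedSqSum_freq_le (hsol : IsSolution m γ a θ ω ω') (hsym : ∀ i j, a i j = a j i)
    (hγ : ∀ i, 0 ≤ γ i) {t : ℝ} (ht : 0 ≤ t) :
    weightedSqSum m (ω t) ≤ 2 * energy m a (θ 0) (ω 0) + ∑ i, ∑ j, |a i j| := by
  have hE : energy m a (θ t) (ω t) ≤ energy m a (θ 0) (ω 0) :=
    hsol.antitoneOn_energy hsym hγ self_mem_Ici ht ht
  have hP := (abs_le.1 (abs_couplingPotential_le a (θ t))).1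
  simp only [energy] at hE ⊢
  linarith

theorem exists_tendsto_energy (hsol : IsSolution m γ a θ ω ω') (hsym : ∀ i j, a i j = a j i)
    (hm : ∀ i, 0 ≤ m i) (hγ : ∀ i, 0 ≤ γ i) :
    ∃ L, Tendsto (fun t => energy m a (θ t) (ω t)) atTop (𝓝 L) := by
  refine exists_tendsto_atTop_of_antitoneOn_Ici (hsol.antitoneOn_energy hsym hγ)
    (C := -(∑ i, ∑ j, |a i j|) / 2) fun t _ => ?_
  have hP := (abs_le.1 (abs_couplingPotential_le a (θ t))).1
  have hK := weightedSqSum_nonneg hm (ω t)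
  simp only [energy]
  linarith

theorem exists_abs_freq_le (hsol : IsSolution m γ a θ ω ω') (hsym : ∀ i j, a i j = a j i)
    (hm : ∀ i, 0 < m i) (hγ : ∀ i, 0 ≤ γ i) (i : Fin N) :
    ∃ C, ∀ t ≥ 0, |ω t i| ≤ C := by
  refine ⟨√((2 * energy m a (θ 0) (ω 0) + ∑ k, ∑ l, |a k l|) / m i), fun t ht => abs_le_sqrt ?_⟩
  rw [le_div_iff₀' (hm i)]
  exact (single_le_weightedSqSum (fun j => (hm j).le) (ω t) i).trans
    (hsol.weightedSqSum_freq_le hsym hγ ht)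

theorem exists_abs_freq_deriv_le (hsol : IsSolution m γ a θ ω ω') (hsym : ∀ i j, a i j = a j i)
    (hm : ∀ i, 0 < m i) (hγ : ∀ i, 0 ≤ γ i) (i : Fin N) :
    ∃ C, ∀ t ≥ 0, |ω' t i| ≤ C := by
  obtain ⟨C, hC⟩ := hsol.exists_abs_freq_le hsym hm hγ i
  refine ⟨(γ i * C + ∑ j, |a i j|) / m i, fun t ht => ?_⟩
  rw [le_div_iff₀' (hm i), ← abs_of_pos (hm i), ← abs_mul, hsol.ode t ht i]
  calc |-γ i * ω t i + couplingForce a (θ t) i|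
      ≤ |-γ i * ω t i| + |couplingForce a (θ t) i| := abs_add_le _ _
    _ ≤ γ i * C + ∑ j, |a i j| := by
      rw [abs_mul, abs_neg, abs_of_nonneg (hγ i)]
      exact add_le_add (mul_le_mul_of_nonneg_left (hC t ht) (hγ i))
        (abs_couplingForce_le a (θ t) i)

theorem uniformContinuousOn_dissipation (hsol : IsSolution m γ a θ ω ω')
    (hsym : ∀ i j, a i j = a j i) (hm : ∀ i, 0 < m i) (hγ : ∀ i, 0 ≤ γ i) :
    UniformContinuousOn (fun t => weightedSqSum γ (ω t)) (Ici 0) := by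
  choose C hC using hsol.exists_abs_freq_le hsym hm hγ
  choose C' hC' using hsol.exists_abs_freq_deriv_le hsym hm hγ
  set M := 2 * ∑ i, γ i * (C i * C' i)
  have hbound : ∀ t ≥ 0, |2 * ∑ i, γ i * ω t i * ω' t i| ≤ M := by
    intro t ht
    rw [abs_mul, abs_two]
    refine mul_le_mul_of_nonneg_left ?_ zero_le_two
    refine (Finset.abs_sum_le_sum_abs _ _).trans (Finset.sum_le_sum fun i _ => ?_)
    rw [mul_assoc, abs_mul, abs_of_nonneg (hγ i), abs_mul]
    exact mul_le_mul_of_nonneg_left (mul_le_mul (hC i t ht) (hC' i t ht) (abs_nonneg _)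
      ((abs_nonneg _).trans (hC i t ht))) (hγ i)
  exact ((convex_Ici 0).lipschitzOnWith_of_nnnorm_hasDerivWithin_le (C := M.toNNReal)
    (fun t _ => (hasDerivAt_weightedSqSum γ (hsol.hasDerivAt_freq t)).hasDerivWithinAt)
    (fun t ht => by
      rw [← NNReal.coe_le_coe, coe_nnnorm, Real.coe_toNNReal']
      exact (hbound t ht).trans (le_max_left _ _))).uniformContinuousOn

theorem tendsto_dissipation (hsol : IsSolution m γ a θ ω ω') (hsym : ∀ i j, a i j = a j i)
    (hm : ∀ i, 0 < m i) (hγ : ∀ i, 0 ≤ γ i) :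
    Tendsto (fun t => weightedSqSum γ (ω t)) atTop (𝓝 0) := by
  obtain ⟨L, hL⟩ := hsol.exists_tendsto_energy hsym (fun i => (hm i).le) hγ
  exact tendsto_zero_of_hasDerivAt_of_uniformContinuousOn
    (fun t ht => by simpa using (hsol.hasDerivAt_energy hsym ht).fun_neg) hL.neg
    (hsol.uniformContinuousOn_dissipation hsym hm hγ)

theorem tendsto_freq (hsol : IsSolution m γ a θ ω ω') (hsym : ∀ i j, a i j = a j i)
    (hm : ∀ i, 0 < m i) (hγ : ∀ i, 0 < γ i) (i : Fin N) :
    Tendsto (fun t => ω t i) atTop (𝓝 0) := by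
  have hsq : Tendsto (fun t => ω t i ^ 2) atTop (𝓝 0) := by
    refine squeeze_zero (fun t => sq_nonneg _) (fun t => ?_)
      (by simpa using (hsol.tendsto_dissipation hsym hm fun j => (hγ j).le).div_const (γ i))
    rw [le_div_iff₀' (hγ i)]
    exact single_le_weightedSqSum (fun j => (hγ j).le) (ω t) i
  have habs : Tendsto (fun t => |ω t i|) atTop (𝓝 0) := by
    simpa [sqrt_sq_eq_abs] using hsq.sqrt
  exact (tendsto_zero_iff_abs_tendsto_zero _).2 habs

end IsSolution

end InertialKuramoto

end

theorem kuramoto_heterogeneous_frequency_decay_general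
    (N : ℕ)
    (m γ : Fin N → ℝ) (hm : ∀ i, 0 < m i) (hγ : ∀ i, 0 < γ i)
    (a : Fin N → Fin N → ℝ)
    (hsym : ∀ i j, a i j = a j i)
    (θ : ℝ → Fin N → ℝ)
    (hreg : ∀ i, ContDiff ℝ 2 (fun t => θ t i))
    (hode : ∀ t ≥ (0:ℝ), ∀ i,
      m i * deriv (deriv (fun s => θ s i)) t
        = -γ i * deriv (fun s => θ s i) t
          + ∑ j, a i j * Real.sin (θ t j - θ t i)) :
    (∀ i, Tendsto (fun t => deriv (fun s => θ s i) t) atTop (nhds 0)) ∧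
    (∀ i j, Tendsto
      (fun t => |deriv (fun s => θ s i) t - deriv (fun s => θ s j) t|)
      atTop (nhds 0)) := by
  have hsol : InertialKuramoto.IsSolution m γ a θ (fun t i => deriv (fun s => θ s i) t)
      (fun t i => deriv (deriv (fun s => θ s i)) t) :=
    { hasDerivAt_phase := fun t i => ((hreg i).differentiable two_ne_zero t).hasDerivAt
      hasDerivAt_freq := fun t i => ((hreg i).differentiable_deriv_two t).hasDerivAt
      ode := hode }
  have hfreq := hsol.tendsto_freq hsym hm hγ
  exact ⟨hfreq, fun i j => by simpa using ((hfreq i).sub (hfreq j)).abs⟩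

/-- For the inertial Kuramoto model on a symmetric network with
heterogeneous inertia and friction, the frequencies vanish asymptotically,
and in particular complete synchronization emerges. -/
theorem kuramoto_heterogeneous_frequency_decay
    (N : ℕ) (hN : 1 ≤ N)
    (m γ : Fin N → ℝ) (hm : ∀ i, 0 < m i) (hγ : ∀ i, 0 < γ i)
    (a : Fin N → Fin N → ℝ)
    (hsym : ∀ i j, a i j = a j i) (hnn : ∀ i j, 0 ≤ a i j)
    (θ : ℝ → Fin N → ℝ)
    (hreg : ∀ i, ContDiff ℝ 2 (fun t => θ t i))
    (hode : ∀ t ≥ (0:ℝ), ∀ i,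
      m i * deriv (deriv (fun s => θ s i)) t
        = -γ i * deriv (fun s => θ s i) t
          + ∑ j, a i j * Real.sin (θ t j - θ t i)) :
    (∀ i, Tendsto (fun t => deriv (fun s => θ s i) t) atTop (nhds 0)) ∧
    (∀ i j, Tendsto
      (fun t => |deriv (fun s => θ s i) t - deriv (fun s => θ s j) t|)
      atTop (nhds 0)) :=
  kuramoto_heterogeneous_frequency_decay_general N m γ hm hγ a hsym θ hreg hode
end

section
/- Let θ : [0,∞) → ℝ^N solve the inertial Kuramoto model on a symmetric network with heterogeneous inertia and friction, and suppose there exist ā > 0 and δ ≥ 0 such that Σ_{j=1}^N |a_{ij} − ā| ≤ δ for every i, and such that the initial data satisfy J > 3δN + δ²/ā, where J := Σ_{i,j=1}^N a_{ij}·cos(θ_i(0) − θ_j(0)) − Σ_{i=1}^N m_i·ω_i(0)². Then each local order parameter is majorized by the global one: for all t ≥ 0 and all i, R_{p,i}(t) ≤ C_0·R_p(t), where C_0 := sqrt( ā²N² + ā·N²·(2āδN + δ²)/(J − δN) ). -/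
/-!
`E(t) = ∑ᵢⱼ aᵢⱼ cos(θᵢ - θⱼ) - ∑ᵢ mᵢ ωᵢ²`, with `E(0) = J`, is nondecreasing: by the symmetry of `a`
and the equations of motion, `E' = 2 ∑ᵢ γᵢ ωᵢ²`. With `z = ∑ⱼ exp(iθⱼ)` one has `|z| = N R_p` and
`|z|² = ∑ᵢⱼ cos(θᵢ - θⱼ)`, so replacing `a` by the constant `ā` at a cost of `δ` per row gives
`0 < J - δN ≤ E(t) - δN ≤ ā N² R_p²` and `R_{p,i} ≤ ā N R_p + δ`. Squaring the latter and using
`R_p ≤ 1`, the lower bound on `R_p²` absorbs the additive error `δ` into the constant `C₀`.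
-/

open Finset Real

section

variable {ι : Type*} [Fintype ι]

theorem norm_sum_exp_I_mul_sq (x : ι → ℝ) :
    ‖∑ j, Complex.exp (Complex.I * x j)‖ ^ 2 = ∑ i, ∑ j, cos (x i - x j) := by
  rw [Complex.sq_norm, ← Complex.ofReal_re (Complex.normSq _), ← Complex.mul_conj, map_sum,
    sum_mul_sum, Complex.re_sum]
  refine sum_congr rfl fun i _ => ?_
  rw [Complex.re_sum]
  refine sum_congr rfl fun j _ => ?_
  rw [← Complex.exp_conj, ← Complex.exp_add, ← Complex.exp_ofReal_mul_I_re (x i - x j)]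
  congr 2
  simp only [map_mul, Complex.conj_I, Complex.conj_ofReal, Complex.ofReal_sub]
  ring

theorem norm_sum_exp_I_mul_le_card (x : ι → ℝ) :
    ‖∑ j, Complex.exp (Complex.I * x j)‖ ≤ Fintype.card ι := by
  simpa using norm_sum_le_of_le univ fun j _ => (Complex.norm_exp_I_mul_ofReal (x j)).le

theorem norm_sum_smul_sub_smul_sum_le {E : Type*} [SeminormedAddCommGroup E] [NormedSpace ℝ E]
    (b : ι → ℝ) (c : ℝ) {w : ι → E} (hw : ∀ j, ‖w j‖ ≤ 1) :
    ‖∑ j, b j • w j - c • ∑ j, w j‖ ≤ ∑ j, |b j - c| := by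
  rw [smul_sum, ← sum_sub_distrib]
  refine norm_sum_le_of_le univ fun j _ => ?_
  rw [← sub_smul, norm_smul, Real.norm_eq_abs]
  exact mul_le_of_le_one_right (abs_nonneg _) (hw j)

theorem sum_sum_mul_cos_le {a : ι → ι → ℝ} {abar δ : ℝ} (hnet : ∀ i, ∑ j, |a i j - abar| ≤ δ)
    (x : ι → ℝ) :
    ∑ i, ∑ j, a i j * cos (x i - x j)
      ≤ abar * ‖∑ j, Complex.exp (Complex.I * x j)‖ ^ 2 + δ * Fintype.card ι := by
  have hrow (i : ι) : ∑ j, a i j * cos (x i - x j) ≤ abar * ∑ j, cos (x i - x j) + δ := by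
    have h := (le_abs_self _).trans <| (norm_sum_smul_sub_smul_sum_le (a i) abar
      fun j => (Real.norm_eq_abs _).trans_le (abs_cos_le_one (x i - x j))).trans (hnet i)
    simp only [smul_eq_mul] at h
    linarith
  calc ∑ i, ∑ j, a i j * cos (x i - x j) ≤ ∑ i, (abar * ∑ j, cos (x i - x j) + δ) :=
        sum_le_sum fun i _ => hrow i
    _ = _ := by
        rw [norm_sum_exp_I_mul_sq, sum_add_distrib, ← mul_sum, sum_const, card_univ,
          nsmul_eq_mul, mul_comm δ]

theorem norm_sum_mul_exp_I_mul_le {b : ι → ℝ} {abar δ : ℝ} (habar : 0 ≤ abar)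
    (hb : ∑ j, |b j - abar| ≤ δ) (x : ι → ℝ) :
    ‖∑ j, (b j : ℂ) * Complex.exp (Complex.I * x j)‖
      ≤ abar * ‖∑ j, Complex.exp (Complex.I * x j)‖ + δ := by
  have h := (norm_sum_smul_sub_smul_sum_le b abar
    fun j => (Complex.norm_exp_I_mul_ofReal (x j)).le).trans hb
  simp only [Complex.real_smul] at h
  calc _ ≤ ‖(abar : ℂ) * ∑ j, Complex.exp (Complex.I * x j)‖ + δ :=
        (norm_le_norm_add_norm_sub' _ _).trans (by gcongr)
    _ = _ := by rw [norm_mul, Complex.norm_real, Real.norm_of_nonneg habar]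

noncomputable def kuramotoEnergy (m : ι → ℝ) (a : ι → ι → ℝ) (θ : ℝ → ι → ℝ) (t : ℝ) : ℝ :=
  ∑ i, ∑ j, a i j * cos (θ t i - θ t j) - ∑ i, m i * deriv (fun s => θ s i) t ^ 2

theorem sum_sum_mul_neg_sin_mul_sub {a : ι → ι → ℝ} (hsym : ∀ i j, a i j = a j i) (x v : ι → ℝ) :
    ∑ i, ∑ j, a i j * (-sin (x i - x j) * (v i - v j))
      = 2 * ∑ i, (∑ j, a i j * sin (x j - x i)) * v i := by
  have hsin (i j : ι) : sin (x i - x j) = -sin (x j - x i) := by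
    rw [← sin_neg, neg_sub]
  have hswap : ∑ i, ∑ j, a i j * sin (x j - x i) * v j
      = -∑ i, ∑ j, a i j * sin (x j - x i) * v i := by
    rw [sum_comm, ← sum_neg_distrib]
    refine sum_congr rfl fun i _ => ?_
    rw [← sum_neg_distrib]
    refine sum_congr rfl fun j _ => ?_
    rw [hsym j i, hsin]
    ring
  calc ∑ i, ∑ j, a i j * (-sin (x i - x j) * (v i - v j))
      = ∑ i, ∑ j, (a i j * sin (x j - x i) * v i - a i j * sin (x j - x i) * v j) := by
        refine sum_congr rfl fun i _ => sum_congr rfl fun j _ => ?_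
        rw [hsin]
        ring
    _ = _ := by
        simp only [sum_sub_distrib, hswap, sum_mul]
        ring

theorem hasDerivAt_kuramotoEnergy (m : ι → ℝ) {a : ι → ι → ℝ} (hsym : ∀ i j, a i j = a j i)
    {θ : ℝ → ι → ℝ} (hreg : ∀ i, ContDiff ℝ 2 fun t => θ t i) (t : ℝ) :
    HasDerivAt (kuramotoEnergy m a θ)
      (2 * ∑ i, (∑ j, a i j * sin (θ t j - θ t i)
        - m i * deriv (deriv fun s => θ s i) t) * deriv (fun s => θ s i) t) t := by
  have hθ (i : ι) : HasDerivAt (fun s => θ s i) (deriv (fun s => θ s i) t) t :=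
    ((hreg i).differentiable two_ne_zero t).hasDerivAt
  have hω (i : ι) : HasDerivAt (deriv fun s => θ s i) (deriv (deriv fun s => θ s i) t) t :=
    ((hreg i).differentiable_deriv_two t).hasDerivAt
  have hpot : HasDerivAt (fun s => ∑ i, ∑ j, a i j * cos (θ s i - θ s j))
      (∑ i, ∑ j, a i j * (-sin (θ t i - θ t j)
        * (deriv (fun s => θ s i) t - deriv (fun s => θ s j) t))) t :=
    HasDerivAt.fun_sum fun i _ => HasDerivAt.fun_sum fun j _ =>
      ((hθ i).sub (hθ j)).cos.const_mul (a i j)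
  have hkin : HasDerivAt (fun s => ∑ i, m i * deriv (fun s => θ s i) s ^ 2)
      (∑ i, m i * (2 * deriv (fun s => θ s i) t * deriv (deriv fun s => θ s i) t)) t :=
    HasDerivAt.fun_sum fun i _ => by simpa using ((hω i).pow 2).const_mul (m i)
  refine (hpot.sub hkin).congr_deriv ?_
  rw [sum_sum_mul_neg_sin_mul_sub hsym, mul_sum, mul_sum, ← sum_sub_distrib]
  refine sum_congr rfl fun i _ => ?_
  ring

theorem kuramotoEnergy_monotoneOn {m γ : ι → ℝ} (hγ : ∀ i, 0 ≤ γ i) {a : ι → ι → ℝ}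
    (hsym : ∀ i j, a i j = a j i) {θ : ℝ → ι → ℝ} (hreg : ∀ i, ContDiff ℝ 2 fun t => θ t i)
    (hode : ∀ t ≥ (0:ℝ), ∀ i, m i * deriv (deriv fun s => θ s i) t
      = -γ i * deriv (fun s => θ s i) t + ∑ j, a i j * sin (θ t j - θ t i)) :
    MonotoneOn (kuramotoEnergy m a θ) (Set.Ici 0) := by
  have hE := hasDerivAt_kuramotoEnergy m hsym hreg
  refine monotoneOn_of_deriv_nonneg (convex_Ici 0)
    (fun t _ => (hE t).continuousAt.continuousWithinAt)
    (fun t _ => (hE t).differentiableAt.differentiableWithinAt) fun t ht => ?_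
  rw [interior_Ici, Set.mem_Ioi] at ht
  have hfriction (i : ι) : ∑ j, a i j * sin (θ t j - θ t i) - m i * deriv (deriv fun s => θ s i) t
      = γ i * deriv (fun s => θ s i) t := by
    linarith [hode t ht.le i]
  rw [(hE t).deriv]
  simp only [hfriction, mul_assoc]
  exact mul_nonneg zero_le_two (sum_nonneg fun i _ => mul_nonneg (hγ i) (mul_self_nonneg _))

end

theorem add_le_sqrt_mul_of_le_mul_sq {abar δ N P r : ℝ} (habar : 0 ≤ abar) (hδ : 0 ≤ δ)
    (hN : 0 ≤ N) (hP : 0 < P) (hr₀ : 0 ≤ r) (hr₁ : r ≤ 1) (hPr : P ≤ abar * N ^ 2 * r ^ 2) :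
    abar * N * r + δ
      ≤ sqrt (abar ^ 2 * N ^ 2 + abar * N ^ 2 * (2 * abar * δ * N + δ ^ 2) / P) * r := by
  set X := abar * N ^ 2 * (2 * abar * δ * N + δ ^ 2) / P
  have hX : 2 * abar * δ * N + δ ^ 2 ≤ X * r ^ 2 := by
    rw [div_mul_eq_mul_div, le_div_iff₀ hP]
    calc (2 * abar * δ * N + δ ^ 2) * P
        ≤ (2 * abar * δ * N + δ ^ 2) * (abar * N ^ 2 * r ^ 2) := by gcongr
      _ = _ := by ring
  have hcross : abar * N * r * δ ≤ abar * N * δ :=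
    mul_le_mul_of_nonneg_right (mul_le_of_le_one_right (by positivity) hr₁) hδ
  have hsqrt : sqrt (abar ^ 2 * N ^ 2 + X) * r = sqrt ((abar ^ 2 * N ^ 2 + X) * r ^ 2) := by
    rw [sqrt_mul (by positivity), sqrt_sq hr₀]
  rw [hsqrt, le_sqrt (by positivity) (by positivity)]
  nlinarith

theorem kuramoto_heterogeneous_local_global_majorization_general
    (N : ℕ)
    (m γ : Fin N → ℝ) (hm : ∀ i, 0 < m i) (hγ : ∀ i, 0 < γ i)
    (a : Fin N → Fin N → ℝ)
    (hsym : ∀ i j, a i j = a j i)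
    (θ : ℝ → Fin N → ℝ)
    (hreg : ∀ i, ContDiff ℝ 2 (fun t => θ t i))
    (hode : ∀ t ≥ (0:ℝ), ∀ i,
      m i * deriv (deriv (fun s => θ s i)) t
        = -γ i * deriv (fun s => θ s i) t
          + ∑ j, a i j * Real.sin (θ t j - θ t i))
    (abar δ : ℝ) (habar : 0 < abar) (hδ : 0 ≤ δ)
    (hnet : ∀ i, ∑ j, |a i j - abar| ≤ δ)
    (J : ℝ)
    (hJ : J = ∑ i, ∑ j, a i j * Real.cos (θ 0 i - θ 0 j)
      - ∑ i, m i * (deriv (fun s => θ s i) 0) ^ 2)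
    (hinit : J > 3 * δ * N + δ ^ 2 / abar)
    (Rp : ℝ → ℝ)
    (hRp : Rp = fun t =>
      ‖(N : ℂ)⁻¹ * ∑ j, Complex.exp (Complex.I * (θ t j : ℂ))‖)
    (Rpi : Fin N → ℝ → ℝ)
    (hRpi : Rpi = fun i t =>
      ‖∑ j, (a i j : ℂ) * Complex.exp (Complex.I * (θ t j : ℂ))‖)
    (C₀ : ℝ)
    (hC₀ : C₀ = Real.sqrt (abar ^ 2 * N ^ 2
      + abar * N ^ 2 * (2 * abar * δ * N + δ ^ 2) / (J - δ * N))) :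
    ∀ t ≥ (0:ℝ), ∀ i, Rpi i t ≤ C₀ * Rp t := by
  intro t ht i
  have hN : (0 : ℝ) < N := by exact_mod_cast i.pos
  set z := ∑ j, Complex.exp (Complex.I * (θ t j : ℂ))
  have hz : ‖z‖ = N * Rp t := by
    simp only [hRp]
    rw [norm_mul, norm_inv, Complex.norm_natCast, mul_inv_cancel_left₀ hN.ne']
  have hRp₀ : 0 ≤ Rp t := hRp ▸ norm_nonneg _
  have hRp₁ : Rp t ≤ 1 := by
    have h := norm_sum_exp_I_mul_le_card (θ t)
    rw [Fintype.card_fin, hz] at h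
    exact (mul_le_iff_le_one_right hN).mp h
  have hP : 0 < J - δ * N := by
    have : 0 ≤ δ ^ 2 / abar := by positivity
    linarith [mul_nonneg hδ hN.le]
  have hJz : J - δ * N ≤ abar * N ^ 2 * Rp t ^ 2 := by
    have hE : J ≤ kuramotoEnergy m a θ t :=
      hJ ▸ kuramotoEnergy_monotoneOn (fun i => (hγ i).le) hsym hreg hode Set.self_mem_Ici ht ht
    have hkin : 0 ≤ ∑ i, m i * deriv (fun s => θ s i) t ^ 2 :=
      sum_nonneg fun i _ => mul_nonneg (hm i).le (sq_nonneg _)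
    have hpot := sum_sum_mul_cos_le hnet (θ t)
    rw [Fintype.card_fin, hz] at hpot
    unfold kuramotoEnergy at hE
    linarith
  have hloc : Rpi i t ≤ abar * N * Rp t + δ := by
    have h := norm_sum_mul_exp_I_mul_le habar.le (hnet i) (θ t)
    rw [hz, ← mul_assoc] at h
    exact hRpi ▸ h
  exact hC₀ ▸ hloc.trans (add_le_sqrt_mul_of_le_mul_sq habar.le hδ hN.le hP hRp₀ hRp₁ hJz)

/-- Each local order parameter is majorized by the global one
for the inertial Kuramoto model on a nearly all-to-all symmetric network:
under `J > 3δN + δ²/ā`, it holds `R_{p,i}(t) ≤ C₀·R_p(t)` for all `t ≥ 0`,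
where `C₀ = sqrt(ā²N² + ā·N²·(2āδN + δ²)/(J − δN))`. -/
theorem kuramoto_heterogeneous_local_global_majorization
    (N : ℕ) (hN : 1 ≤ N)
    (m γ : Fin N → ℝ) (hm : ∀ i, 0 < m i) (hγ : ∀ i, 0 < γ i)
    (a : Fin N → Fin N → ℝ)
    (hsym : ∀ i j, a i j = a j i) (hnn : ∀ i j, 0 ≤ a i j)
    (θ : ℝ → Fin N → ℝ)
    (hreg : ∀ i, ContDiff ℝ 2 (fun t => θ t i))
    (hode : ∀ t ≥ (0:ℝ), ∀ i,
      m i * deriv (deriv (fun s => θ s i)) t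
        = -γ i * deriv (fun s => θ s i) t
          + ∑ j, a i j * Real.sin (θ t j - θ t i))
    (abar δ : ℝ) (habar : 0 < abar) (hδ : 0 ≤ δ)
    (hnet : ∀ i, ∑ j, |a i j - abar| ≤ δ)
    (J : ℝ)
    (hJ : J = ∑ i, ∑ j, a i j * Real.cos (θ 0 i - θ 0 j)
      - ∑ i, m i * (deriv (fun s => θ s i) 0) ^ 2)
    (hinit : J > 3 * δ * N + δ ^ 2 / abar)
    (Rp : ℝ → ℝ)
    (hRp : Rp = fun t =>
      ‖(N : ℂ)⁻¹ * ∑ j, Complex.exp (Complex.I * (θ t j : ℂ))‖)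
    (Rpi : Fin N → ℝ → ℝ)
    (hRpi : Rpi = fun i t =>
      ‖∑ j, (a i j : ℂ) * Complex.exp (Complex.I * (θ t j : ℂ))‖)
    (C₀ : ℝ)
    (hC₀ : C₀ = Real.sqrt (abar ^ 2 * N ^ 2
      + abar * N ^ 2 * (2 * abar * δ * N + δ ^ 2) / (J - δ * N))) :
    ∀ t ≥ (0:ℝ), ∀ i, Rpi i t ≤ C₀ * Rp t :=
  kuramoto_heterogeneous_local_global_majorization_general N m γ hm hγ a hsym θ hreg hode abar δ
    habar hδ hnet J hJ hinit Rp hRp Rpi hRpi C₀ hC₀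
end
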